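/- arXiv:1803.09267 — 6 statements merged into one kernel-verified Lean document; each statement's English description precedes it below -/
import Mathlib

section
/- Let k be a field, A a finite-dimensional unital associative k-algebra with dim_k A = n, λ : A → k a symmetric Frobenius form, and (e_i)_{i∈Fin n}, (f_i)_{i∈Fin n} λ-dual bases of A. Let d be a natural number, write A^d for Fin d → A, let M be a d×d matrix with entries in A, and let ψ : A^d → A^d be the k-linear (and right A-linear) map ψ(v) j = Σ_{m∈Fin d} (M j m)·(v m). Then for every k-linear endomorphism φ : A^d → A^d, the trace of φ ∘ ψ as a k-linear map equals λ( Σ_{j,m∈Fin d} ( Σ_{i∈Fin n} (φ(Pi.single m e_i)) j · f_i ) · (M m j) ). -/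
/-!
Cyclicity of the trace gives `tr (φ ∘ ψ) = tr (ψ ∘ φ)`. In the basis `Pi.single m (e i)` of `A^d`,
the coordinate along `e i` is `a ↦ lam (a * f i)` by duality, so `tr (ψ ∘ φ)` is
`∑ m i j, lam (M m j * φ (Pi.single m (e i)) j * f i)`; symmetry of `lam` moves `M m j` to
the right, and collecting the sums gives the claimed formula.
-/

open Module

theorem Module.Basis.repr_apply_eq_of_dual {k A κ : Type*} [CommRing k] [Ring A] [Algebra k A]
    [Fintype κ] [DecidableEq κ] (lam : A →ₗ[k] k) (e : Basis κ k A) (f : κ → A)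
    (hdual : ∀ i j, lam (e i * f j) = if i = j then 1 else 0) (a : A) (i : κ) :
    e.repr a i = lam (a * f i) :=
  calc e.repr a i = lam ((∑ j, e.repr a j • e j) * f i) := by
        simp only [Finset.sum_mul, map_sum, smul_mul_assoc, map_smul, hdual, smul_eq_mul,
          mul_ite, mul_one, mul_zero, Finset.sum_ite_eq', Finset.mem_univ, if_true]
    _ = lam (a * f i) := by rw [e.sum_repr]

theorem LinearMap.trace_pi_eq_sum_repr {k A ι κ : Type*} [CommRing k] [AddCommGroup A]
    [Module k A] [Fintype ι] [DecidableEq ι] [Fintype κ] [DecidableEq κ]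
    (e : Basis κ k A) (χ : (ι → A) →ₗ[k] (ι → A)) :
    trace k (ι → A) χ = ∑ m, ∑ i, e.repr (χ (Pi.single m (e i)) m) i := by
  rw [trace_eq_matrix_trace k (Pi.basis fun _ : ι => e), Matrix.trace,
    ← Finset.univ_sigma_univ, Finset.sum_sigma]
  simp [LinearMap.toMatrix_apply, Pi.basis_repr, Pi.basis_apply]

theorem stmt2_general (k : Type*) [Field k] (A : Type*) [Ring A] [Algebra k A]
    (n : ℕ)
    (lam : A →ₗ[k] k)
    (hsymm : ∀ a b : A, lam (a * b) = lam (b * a))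
    (e : Module.Basis (Fin n) k A) (f : Fin n → A)
    (hdual : ∀ i j : Fin n, lam (e i * f j) = if i = j then 1 else 0)
    (d : ℕ) (M : Matrix (Fin d) (Fin d) A)
    (ψ : (Fin d → A) →ₗ[k] (Fin d → A))
    (hψ : ∀ (v : Fin d → A) (j : Fin d), ψ v j = ∑ m : Fin d, M j m * v m)
    (φ : (Fin d → A) →ₗ[k] (Fin d → A)) :
    LinearMap.trace k (Fin d → A) (φ ∘ₗ ψ) =
      lam (∑ j : Fin d, ∑ m : Fin d,
        (∑ i : Fin n, φ (Pi.single m (e i)) j * f i) * M m j) := by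
  calc LinearMap.trace k (Fin d → A) (φ * ψ)
      = LinearMap.trace k (Fin d → A) (ψ * φ) := LinearMap.trace_mul_comm k φ ψ
    _ = ∑ m, ∑ i, lam (ψ (φ (Pi.single m (e i))) m * f i) := by
        simp only [LinearMap.trace_pi_eq_sum_repr e, e.repr_apply_eq_of_dual lam f hdual,
          Module.End.mul_apply]
    _ = ∑ m, ∑ i, ∑ j, lam (φ (Pi.single m (e i)) j * f i * M m j) := by
        simp only [hψ, Finset.sum_mul, map_sum, mul_assoc, hsymm (M _ _)]
    _ = _ := by
        simp only [map_sum, Finset.sum_mul]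
        exact (Finset.sum_congr rfl fun _ _ => Finset.sum_comm).trans Finset.sum_comm

/-- Let `k` be a field, `A` a finite-dimensional unital associative
`k`-algebra with `dim_k A = n`, `lam` a symmetric Frobenius form on `A`, and
`(e i)`, `(f i)` `lam`-dual bases of `A`. Let `d : ℕ`, `M` a `d × d` matrix over `A`,
and `ψ : A^d → A^d` the `k`-linear (and right `A`-linear) map `ψ v j = ∑ m, M j m * v m`.
Then for every `k`-linear endomorphism `φ : A^d → A^d`, the trace of `φ ∘ ψ` as a
`k`-linear map equals
`lam (∑ j, ∑ m, (∑ i, (φ (Pi.single m (e i))) j * f i) * M m j)`. -/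
theorem stmt2 (k : Type*) [Field k] (A : Type*) [Ring A] [Algebra k A]
    [FiniteDimensional k A] (n : ℕ) (hn : Module.finrank k A = n)
    (lam : A →ₗ[k] k)
    (hnondeg : ∀ a : A, (∀ b : A, lam (a * b) = 0) → a = 0)
    (hsymm : ∀ a b : A, lam (a * b) = lam (b * a))
    (e : Module.Basis (Fin n) k A) (f : Fin n → A)
    (hdual : ∀ i j : Fin n, lam (e i * f j) = if i = j then 1 else 0)
    (d : ℕ) (M : Matrix (Fin d) (Fin d) A)
    (ψ : (Fin d → A) →ₗ[k] (Fin d → A))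
    (hψ : ∀ (v : Fin d → A) (j : Fin d), ψ v j = ∑ m : Fin d, M j m * v m)
    (φ : (Fin d → A) →ₗ[k] (Fin d → A)) :
    LinearMap.trace k (Fin d → A) (φ ∘ₗ ψ) =
      lam (∑ j : Fin d, ∑ m : Fin d,
        (∑ i : Fin n, φ (Pi.single m (e i)) j * f i) * M m j) :=
  stmt2_general k A n lam hsymm e f hdual d M ψ hψ φ
end

section
/- Let k be a field, A a finite-dimensional unital associative k-algebra with dim_k A = n, and let λ₁ and λ₂ be two Frobenius forms on A, with λ₁-dual bases (e_i), (f_i) and λ₂-dual bases (e'_i), (f'_i). Then the two-sided ideal of the k-algebra A ⊗_k A (with multiplication (a⊗b)(a'⊗b') = aa' ⊗ bb') generated by the element Σ_{i∈Fin n} e_i ⊗ f_i equals the two-sided ideal generated by Σ_{i∈Fin n} e'_i ⊗ f'_i; that is, the two-sided ideal generated by the canonical element of a Frobenius form is independent of the choice of Frobenius form and dual bases. -/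
open TensorProduct

/-- A Frobenius form on a finite-dimensional unital associative `k`-algebra `A` is a
`k`-linear map `lam : A → k` such that the bilinear form `(a, b) ↦ lam (a * b)` is
nondegenerate. -/
def IsFrobeniusForm {k A : Type*} [Field k] [Ring A] [Algebra k A]
    (lam : A →ₗ[k] k) : Prop :=
  ∀ a : A, (∀ b : A, lam (a * b) = 0) → a = 0

/-!
For `lam₁`-dual bases `(e, f)` and `lam₂`-dual bases `(e', f')`, the element
`u = ∑ j, lam₁ (e' j) • f' j` represents `lam₁` through `lam₂`, i.e. `lam₂ (y * u) = lam₁ y`.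
Expanding `e' i` in the basis `e` and then using this identity gives
`∑ i, e' i ⊗ f' i = (∑ i, e i ⊗ f i) * (1 ⊗ u)`, so each canonical element lies in the
two-sided ideal generated by the other.
-/

namespace TwoSidedIdeal

lemma span_singleton_mul_le {R : Type*} [NonUnitalNonAssocRing R] (a b : R) :
    span {a * b} ≤ span {a} :=
  span_le.2 <| Set.singleton_subset_iff.2 <|
    mul_mem_right _ _ _ (subset_span (Set.mem_singleton a))

end TwoSidedIdeal

section DualBases

variable {k A ι κ : Type*} [CommRing k] [Ring A] [Algebra k A]
  [Fintype ι] [DecidableEq ι] [Fintype κ] [DecidableEq κ]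

def AreDualBases (lam : A →ₗ[k] k) (e : Module.Basis ι k A) (f : ι → A) : Prop :=
  ∀ i j, lam (e i * f j) = if i = j then 1 else 0

namespace AreDualBases

variable {lam : A →ₗ[k] k} {e : Module.Basis ι k A} {f : ι → A}

lemma sum_smul_basis_eq (h : AreDualBases lam e f) (b : A) :
    ∑ j, lam (b * f j) • e j = b := by
  have hcoeff : ∀ j, lam (b * f j) = e.repr b j := fun j => by
    conv_lhs => rw [← e.sum_repr b]
    simp only [Finset.sum_mul, smul_mul_assoc, map_sum, map_smul, h _ j, smul_eq_mul, mul_ite,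
      mul_one, mul_zero, Finset.sum_ite_eq', Finset.mem_univ, if_true]
  simpa only [hcoeff] using e.sum_repr b

lemma lam_basis_mul_sum_smul (h : AreDualBases lam e f) (c : ι → k) (i : ι) :
    lam (e i * ∑ j, c j • f j) = c i := by
  simp [Finset.mul_sum, h i]

/-- Right nondegeneracy: `b ↦ (lam (e i * b))ᵢ` is onto `ι → k` (it sends `f j` to the
`j`-th unit vector), hence injective, because `A ≅ ι → k` and commutative rings have the
Orzech property. -/
lemma sum_smul_dual_eq (h : AreDualBases lam e f) (b : A) :
    ∑ j, lam (e j * b) • f j = b := by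
  let φ : A →ₗ[k] ι → k := LinearMap.pi fun i => lam ∘ₗ LinearMap.mulLeft k (e i)
  have hφ : ∀ c, φ (∑ j, c j • f j) = c := fun c => funext (h.lam_basis_mul_sum_smul c)
  have hinj : Function.Injective φ :=
    OrzechProperty.injective_of_surjective_of_injective e.equivFun.toLinearMap φ
      e.equivFun.injective fun c => ⟨_, hφ c⟩
  exact hinj (hφ _)

lemma lam_mul_sum_smul (h : AreDualBases lam e f) (μ : A →ₗ[k] k) (y : A) :
    lam (y * ∑ j, μ (e j) • f j) = μ y := by
  conv_rhs => rw [← h.sum_smul_basis_eq y]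
  simp [Finset.mul_sum, mul_comm]

lemma mul_sum_smul (h : AreDualBases lam e f) (μ : A →ₗ[k] k) (x : A) :
    x * ∑ j, μ (e j) • f j = ∑ j, μ (e j * x) • f j := by
  conv_lhs => rw [← h.sum_smul_dual_eq (x * _)]
  simp only [← mul_assoc, h.lam_mul_sum_smul]

lemma sum_tmul_eq_mul {lam' : A →ₗ[k] k} {e' : Module.Basis κ k A} {f' : κ → A}
    (h : AreDualBases lam e f) (h' : AreDualBases lam' e' f') :
    ∑ i, e' i ⊗ₜ[k] f' i =
      (∑ i, e i ⊗ₜ[k] f i) * ((1 : A) ⊗ₜ[k] ∑ j, lam (e' j) • f' j) := by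
  simp only [Finset.sum_mul, Algebra.TensorProduct.tmul_mul_tmul, mul_one, h'.mul_sum_smul]
  calc ∑ i, e' i ⊗ₜ[k] f' i
      = ∑ i, (∑ j, lam (e' i * f j) • e j) ⊗ₜ[k] f' i := by
        simp only [h.sum_smul_basis_eq]
    _ = ∑ j, e j ⊗ₜ[k] ∑ i, lam (e' i * f j) • f' i := by
        simp only [sum_tmul, tmul_sum, smul_tmul]
        exact Finset.sum_comm

end AreDualBases

end DualBases

theorem stmt6_general (k : Type*) [Field k] (A : Type*) [Ring A] [Algebra k A]
    (n : ℕ)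
    (lam₁ lam₂ : A →ₗ[k] k)
    (e : Module.Basis (Fin n) k A) (f : Fin n → A)
    (hdual : ∀ i j : Fin n, lam₁ (e i * f j) = if i = j then 1 else 0)
    (e' : Module.Basis (Fin n) k A) (f' : Fin n → A)
    (hdual' : ∀ i j : Fin n, lam₂ (e' i * f' j) = if i = j then 1 else 0) :
    TwoSidedIdeal.span {∑ i : Fin n, (e i) ⊗ₜ[k] (f i)} =
      TwoSidedIdeal.span {∑ i : Fin n, (e' i) ⊗ₜ[k] (f' i)} := by
  have h₁ : AreDualBases lam₁ e f := hdual
  have h₂ : AreDualBases lam₂ e' f' := hdual'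
  apply le_antisymm
  · rw [h₂.sum_tmul_eq_mul h₁]
    exact TwoSidedIdeal.span_singleton_mul_le _ _
  · rw [h₁.sum_tmul_eq_mul h₂]
    exact TwoSidedIdeal.span_singleton_mul_le _ _

/-- Let `k` be a field, `A` a finite-dimensional unital associative
`k`-algebra with `dim_k A = n`, and let `lam₁`, `lam₂` be two Frobenius forms on `A`,
with `lam₁`-dual bases `(e i)`, `(f i)` and `lam₂`-dual bases `(e' i)`, `(f' i)`.
Then the two-sided ideal of the `k`-algebra `A ⊗[k] A` generated by `∑ i, e i ⊗ f i`
equals the two-sided ideal generated by `∑ i, e' i ⊗ f' i`. -/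
theorem stmt6 (k : Type*) [Field k] (A : Type*) [Ring A] [Algebra k A]
    [FiniteDimensional k A] (n : ℕ) (hn : Module.finrank k A = n)
    (lam₁ lam₂ : A →ₗ[k] k)
    (h₁ : IsFrobeniusForm lam₁) (h₂ : IsFrobeniusForm lam₂)
    (e : Module.Basis (Fin n) k A) (f : Fin n → A)
    (hdual : ∀ i j : Fin n, lam₁ (e i * f j) = if i = j then 1 else 0)
    (e' : Module.Basis (Fin n) k A) (f' : Fin n → A)
    (hdual' : ∀ i j : Fin n, lam₂ (e' i * f' j) = if i = j then 1 else 0) :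
    TwoSidedIdeal.span {∑ i : Fin n, (e i) ⊗ₜ[k] (f i)} =
      TwoSidedIdeal.span {∑ i : Fin n, (e' i) ⊗ₜ[k] (f' i)} :=
  stmt6_general k A n lam₁ lam₂ e f hdual e' f' hdual'
end

section
/- Let k be a field with more than two elements, let A be a finite-dimensional unital associative k-algebra, and let λ be a Frobenius form on A. Then either the structure map k → A is surjective (i.e. A = k, dim_k A = 1), or there exists a unit u of A with λ(u) = 0. -/
open Polynomial

theorem Polynomial.isUnit_aeval_of_isCoprime {R B : Type*} [CommRing R] [Ring B] [Algebra R B]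
    {a : B} {g h : R[X]} (hgh : IsCoprime g h) (ha : aeval a h = 0) : IsUnit (aeval a g) := by
  obtain ⟨α, β, hαβ⟩ := hgh
  have hinv : aeval a α * aeval a g = 1 := by
    simpa [ha] using congrArg (aeval a) hαβ
  exact ⟨⟨aeval a g, aeval a α, by rw [← map_mul, mul_comm, map_mul, hinv], hinv⟩, rfl⟩

theorem exists_isIdempotentElem_isUnit_add_isNilpotent_mul (k : Type*) {B : Type*} [Field k]
    [Ring B] [Algebra k B] [FiniteDimensional k B] (a : B) :
    ∃ e : B, IsIdempotentElem e ∧ IsUnit (a + e) ∧ IsNilpotent (a * e) := by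
  set p := minpoly k a
  have hpa : aeval a p = 0 := minpoly.aeval k a
  obtain ⟨q, hpq, hq⟩ :=
    exists_eq_pow_rootMultiplicity_mul_and_not_dvd p (minpoly.ne_zero_of_finite k a) 0
  set r := rootMultiplicity 0 p
  simp only [map_zero, sub_zero] at hpq hq
  have hXq : IsCoprime X q := prime_X.coprime_iff_not_dvd.mpr hq
  obtain ⟨s, t, hst⟩ := hXq.pow_left (m := r)
  -- `t * q` is `1` modulo `X ^ r` and `0` modulo `q`: `e` projects onto the Fitting component
  -- of `B` on which `a` acts nilpotently.
  refine ⟨aeval a (t * q), ?_, ?_, ?_⟩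
  · have hdiv : p ∣ (t * q) * (t * q) - t * q :=
      ⟨-(t * s), by rw [hpq]; linear_combination (t * q) * hst⟩
    have := aeval_eq_zero_of_dvd_aeval_eq_zero hdiv hpa
    rwa [map_sub, map_mul, sub_eq_zero] at this
  · have hXr : IsCoprime (X + 1 : k[X]) (X ^ r) := IsCoprime.pow_right ⟨1, -1, by ring⟩
    have h1 : IsCoprime (X + t * q) (X ^ r) := by
      rw [show X + t * q = X + 1 + X ^ r * (-s) by linear_combination hst]
      exact hXr.add_mul_left_left (-s)
    have h2 : IsCoprime (X + t * q) q := by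
      simpa only [mul_comm q t] using hXq.add_mul_left_left t
    have := isUnit_aeval_of_isCoprime (hpq ▸ h1.mul_right h2) hpa
    simpa using this
  · have hdiv : p ∣ (X * (t * q)) ^ (r + 1) := ⟨X * t ^ (r + 1) * q ^ r, by rw [hpq]; ring⟩
    have := aeval_eq_zero_of_dvd_aeval_eq_zero hdiv hpa
    rw [map_pow, map_mul, aeval_X] at this
    exact ⟨r + 1, this⟩

theorem isUnit_or_isNilpotent_of_forall_isIdempotentElem (k : Type*) {B : Type*} [Field k]
    [Ring B] [Algebra k B] [FiniteDimensional k B]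
    (h : ∀ e : B, IsIdempotentElem e → e = 0 ∨ e = 1) (a : B) : IsUnit a ∨ IsNilpotent a := by
  obtain ⟨e, he, hunit, hnil⟩ := exists_isIdempotentElem_isUnit_add_isNilpotent_mul k a
  rcases h e he with rfl | rfl
  · exact .inl (by simpa using hunit)
  · exact .inr (by simpa using hnil)

section Units

variable {k B : Type*} [Field k] [Ring B] [Algebra k B]

theorem IsIdempotentElem.isUnit_mul_add_smul_one_sub {e u : B} (he : IsIdempotentElem e)
    (hu : IsUnit u) (hcomm : Commute e u) {c : k} (hc : c ≠ 0) :
    IsUnit (e * u + c • (1 - e)) := by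
  have hmul : ∀ (x y : B) (d d' : k), Commute e x → x * y = 1 → d' * d = 1 →
      (e * x + d • (1 - e)) * (e * y + d' • (1 - e)) = 1 := by
    intro x y d d' hx hxy hd
    have h1 : e * x * (e * y) = e := by
      rw [mul_assoc, ← mul_assoc x, ← hx.eq, mul_assoc, ← mul_assoc e, he.eq, hxy, mul_one]
    have h2 : e * x * (1 - e) = 0 := by
      rw [mul_sub, mul_one, mul_assoc, ← hx.eq, ← mul_assoc, he.eq, sub_self]
    have h3 : (1 - e) * (e * y) = 0 := by
      rw [← mul_assoc, sub_mul, one_mul, he.eq, sub_self, zero_mul]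
    simp only [mul_add, add_mul, smul_mul_assoc, mul_smul_comm, h1, h2, h3, he.one_sub.eq,
      smul_zero, add_zero, zero_add]
    rw [smul_smul, hd, one_smul, add_sub_cancel]
  obtain ⟨u, rfl⟩ := hu
  exact ⟨⟨_, _, hmul _ _ c c⁻¹ hcomm u.mul_inv (inv_mul_cancel₀ hc),
    hmul _ _ c⁻¹ c hcomm.units_inv_right u.inv_mul (mul_inv_cancel₀ hc)⟩, rfl⟩

variable [FiniteDimensional k B]

theorem span_setOf_isUnit_eq_top (hk : ∃ c : k, c ≠ 0 ∧ c ≠ 1) :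
    Submodule.span k {u : B | IsUnit u} = ⊤ := by
  obtain ⟨c, hc0, hc1⟩ := hk
  refine Submodule.eq_top_iff'.mpr fun a => ?_
  obtain ⟨e, he, hunit, -⟩ := exists_isIdempotentElem_isUnit_add_isNilpotent_mul k a
  have hmem {u : B} (hu : IsUnit u) : u ∈ Submodule.span k {u : B | IsUnit u} :=
    Submodule.subset_span hu
  have hcu : IsUnit (1 - e + c • e) := by
    simpa using he.one_sub.isUnit_mul_add_smul_one_sub isUnit_one (Commute.one_right _) hc0
  have ha : a = (a + e) - (c - 1)⁻¹ • ((1 - e + c • e) - 1) := by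
    rw [show 1 - e + c • e - 1 = (c - 1) • e by module, smul_smul,
      inv_mul_cancel₀ (sub_ne_zero.mpr hc1), one_smul, add_sub_cancel_right]
  rw [ha]
  exact sub_mem (hmem hunit) (Submodule.smul_mem _ _ (sub_mem (hmem hcu) (hmem isUnit_one)))

end Units

section FrobeniusForm

variable {k A : Type*} [Field k] [Ring A] [Algebra k A] {lam : A →ₗ[k] k}

theorem map_eq_zero_of_isNilpotent (hU : ∀ u : A, IsUnit u → lam u ≠ 0) {x : A}
    (hx : IsNilpotent x) : lam x = 0 := by
  by_contra hx0
  apply hU _ (hx.smul (-lam 1 / lam x)).isUnit_one_add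
  rw [map_add, map_smul, smul_eq_mul, div_mul_cancel₀ _ hx0, add_neg_cancel]

theorem IsFrobeniusForm.eq_zero_of_map_mul_mul_eq_zero (hlam : IsFrobeniusForm lam)
    (hnil : ∀ x : A, IsNilpotent x → lam x = 0) {e : A} (he : IsIdempotentElem e)
    (h : ∀ b, lam (e * b * e) = 0) : e = 0 := by
  refine hlam e fun b => ?_
  have hsq : (e * b * (1 - e)) ^ 2 = 0 := by
    have : (1 - e) * e = 0 := by rw [sub_mul, one_mul, he.eq, sub_self]
    rw [sq, show e * b * (1 - e) * (e * b * (1 - e)) = e * b * ((1 - e) * e) * b * (1 - e) by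
      noncomm_ring, this, mul_zero, zero_mul, zero_mul]
  rw [show e * b = e * b * e + e * b * (1 - e) by noncomm_ring, map_add, h, hnil _ ⟨2, hsq⟩,
    add_zero]

theorem map_mul_mul_eq_zero_of_map_one_sub_ne_zero [FiniteDimensional k A]
    (hk : ∃ c : k, c ≠ 0 ∧ c ≠ 1) (hU : ∀ u : A, IsUnit u → lam u ≠ 0) {e : A}
    (he : IsIdempotentElem e) (h1e : lam (1 - e) ≠ 0) (b : A) : lam (e * b * e) = 0 := by
  let C := Subalgebra.centralizer k {e}
  let φ : C →ₗ[k] k := lam ∘ₗ LinearMap.mulLeft k e ∘ₗ C.val.toLinearMap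
  -- Choosing `c` to kill `lam` at the unit `e * u + c • (1 - e)` shows `φ` vanishes on units.
  have hφ : φ = 0 := LinearMap.ext_on (span_setOf_isUnit_eq_top hk) fun u hu => by
    have hcomm : Commute e u := (Subalgebra.mem_centralizer_iff k).mp u.2 e rfl
    by_contra hne
    apply hU _ (he.isUnit_mul_add_smul_one_sub (hu.map C.val) hcomm
      (div_ne_zero (neg_ne_zero.mpr hne) h1e))
    rw [map_add, map_smul, smul_eq_mul, div_mul_cancel₀ _ h1e]
    exact add_neg_cancel _
  have hmem : e * b * e ∈ C := by
    refine (Subalgebra.mem_centralizer_iff k).mpr fun g hg => ?_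
    rw [Set.mem_singleton_iff.mp hg, ← mul_assoc, ← mul_assoc, he.eq, mul_assoc (e * b), he.eq]
  simpa [φ, ← mul_assoc, he.eq] using LinearMap.congr_fun hφ ⟨_, hmem⟩

variable [FiniteDimensional k A]

theorem IsFrobeniusForm.eq_zero_or_eq_one_of_isIdempotentElem (hk : ∃ c : k, c ≠ 0 ∧ c ≠ 1)
    (hlam : IsFrobeniusForm lam) (hU : ∀ u : A, IsUnit u → lam u ≠ 0) {e : A}
    (he : IsIdempotentElem e) : e = 0 ∨ e = 1 := by
  have hnil (x : A) : IsNilpotent x → lam x = 0 := map_eq_zero_of_isNilpotent hU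
  have eq_zero {f : A} (hf : IsIdempotentElem f) (h1f : lam (1 - f) ≠ 0) : f = 0 :=
    hlam.eq_zero_of_map_mul_mul_eq_zero hnil hf
      (map_mul_mul_eq_zero_of_map_one_sub_ne_zero hk hU hf h1f)
  by_cases h1e : lam (1 - e) = 0
  · rw [map_sub, sub_eq_zero] at h1e
    have he1 : lam (1 - (1 - e)) ≠ 0 := by
      rw [sub_sub_cancel, ← h1e]
      exact hU 1 isUnit_one
    exact .inr (sub_eq_zero.mp (eq_zero he.one_sub he1)).symm
  · exact .inl (eq_zero he h1e)

theorem IsFrobeniusForm.injective_of_map_ne_zero_of_isUnit (hk : ∃ c : k, c ≠ 0 ∧ c ≠ 1)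
    (hlam : IsFrobeniusForm lam) (hU : ∀ u : A, IsUnit u → lam u ≠ 0) :
    Function.Injective lam := by
  have : IsArtinianRing A := .of_finite k A
  have hnil (x : A) (hx : ¬IsUnit x) : lam x = 0 :=
    map_eq_zero_of_isNilpotent hU <| (isUnit_or_isNilpotent_of_forall_isIdempotentElem k
      (fun _ he => hlam.eq_zero_or_eq_one_of_isIdempotentElem hk hU he) x).resolve_left hx
  refine (injective_iff_map_eq_zero lam).mpr fun x hx => hlam x fun b => hnil _ fun hxb => ?_
  exact hU x (isUnit_of_mul_isUnit_left hxb) hx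

end FrobeniusForm

theorem Algebra.surjective_algebraMap_of_injective {k A : Type*} [Field k] [Ring A]
    [Algebra k A] [FiniteDimensional k A] (f : A →ₗ[k] k) (hf : Function.Injective f) :
    Function.Surjective (algebraMap k A) := by
  rcases subsingleton_or_nontrivial A with hA | hA
  · exact fun a => ⟨0, Subsingleton.elim _ _⟩
  rw [Algebra.surjective_algebraMap_iff, eq_comm, Subalgebra.bot_eq_top_iff_finrank_eq_one]
  exact le_antisymm (by simpa using LinearMap.finrank_le_finrank_of_injective hf)
    Module.finrank_pos

/-- Let `k` be a field with more than two elements, `A` a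
finite-dimensional unital associative `k`-algebra, and `lam` a Frobenius form on `A`.
Then either the structure map `k → A` is surjective (i.e. `A = k`), or there exists a
unit `u` of `A` with `lam u = 0`. -/
theorem stmt7 (k : Type*) [Field k] (hk : ∃ c : k, c ≠ 0 ∧ c ≠ 1)
    (A : Type*) [Ring A] [Algebra k A] [FiniteDimensional k A]
    (lam : A →ₗ[k] k) (hlam : IsFrobeniusForm lam) :
    Function.Surjective (algebraMap k A) ∨ ∃ u : Aˣ, lam ↑u = 0 := by
  by_contra! h
  obtain ⟨hsurj, hU⟩ := h
  exact hsurj (Algebra.surjective_algebraMap_of_injective lam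
    (hlam.injective_of_map_ne_zero_of_isUnit hk fun u ⟨v, hv⟩ => hv ▸ hU v))
end

section
/- Let k be a field with more than two elements and let A be a finite-dimensional unital associative k-algebra with dim_k A ≥ 2 that admits a Frobenius form. Then there exists a Frobenius form λ' on A with λ'(1) = 0. -/
section

variable {k A : Type*} [Field k] [Ring A] [Algebra k A]

namespace Submodule

variable (k) in
def corner (e : A) : Submodule k A where
  carrier := {x | e * x = x ∧ x * e = x}
  add_mem' hx hy := ⟨by rw [mul_add, hx.1, hy.1], by rw [add_mul, hx.2, hy.2]⟩
  zero_mem' := ⟨mul_zero e, zero_mul e⟩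
  smul_mem' c _ hx := ⟨by rw [mul_smul_comm, hx.1], by rw [smul_mul_assoc, hx.2]⟩

@[simp]
lemma mem_corner {e x : A} : x ∈ corner k e ↔ e * x = x ∧ x * e = x := Iff.rfl

lemma mul_mul_mem_corner {e a b : A} (ha : e * a = a) (hb : b * e = b) (x : A) :
    a * x * b ∈ corner k e :=
  ⟨by rw [← mul_assoc, ← mul_assoc, ha], by rw [mul_assoc, hb]⟩

lemma corner_lt_corner {e u : A} (he : IsIdempotentElem e) (hu : u ∈ corner k e)
    (hue : u ≠ e) : corner k u < corner k e := by
  refine SetLike.lt_iff_le_and_exists.mpr ⟨fun x hx => ?_, e, mem_corner.mpr ⟨he.eq, he.eq⟩,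
    fun heu => hue (hu.2.symm.trans heu.1)⟩
  exact ⟨by rw [← hx.1, ← mul_assoc, hu.1], by rw [← hx.2, mul_assoc, hu.2]⟩

end Submodule

open Submodule

lemma isNilpotent_mul_mul_of_mul_eq_zero {a b : A} (hba : b * a = 0) (y : A) :
    IsNilpotent (a * y * b) :=
  ⟨2, by
    rw [pow_two, mul_assoc, ← mul_assoc b, ← mul_assoc b, hba, zero_mul, zero_mul, mul_zero]⟩

/-- Invertibility in the corner ring `e A e`, whose identity is `e`. By the Peirce decomposition,
for `g ∈ e A e` an inverse `h ∈ e A e` corresponds to the inverse `h + (1 - e)` of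
`g + (1 - e)` in `A`. -/
def IsCornerUnit (e g : A) : Prop :=
  e * g = g ∧ g * e = g ∧ IsUnit (g + (1 - e))

section IsCornerUnit

variable {e g h u : A}

lemma isCornerUnit_self (he : IsIdempotentElem e) : IsCornerUnit e e :=
  ⟨he.eq, he.eq, by simp⟩

lemma isCornerUnit_one_iff : IsCornerUnit (1 : A) g ↔ IsUnit g := by
  simp [IsCornerUnit]

lemma isCornerUnit_sub_of_isNilpotent {z : A} (he : IsIdempotentElem e) (hz : z ∈ corner k e)
    (hnil : IsNilpotent z) : IsCornerUnit e (e - z) := by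
  refine ⟨by rw [mul_sub, he.eq, hz.1], by rw [sub_mul, he.eq, hz.2], ?_⟩
  rw [sub_add_sub_cancel']
  exact hnil.isUnit_one_sub

lemma IsCornerUnit.smul (he : IsIdempotentElem e) (hg : IsCornerUnit e g) {c : k} (hc : c ≠ 0) :
    IsCornerUnit e (c • g) := by
  refine ⟨by rw [mul_smul_comm, hg.1], by rw [smul_mul_assoc, hg.2.1], ?_⟩
  have hscale : IsUnit (c • e + (1 - e)) := by
    refine ⟨⟨c • e + (1 - e), c⁻¹ • e + (1 - e), ?_, ?_⟩, rfl⟩ <;>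
      simp only [add_mul, mul_add, smul_mul_assoc, mul_smul_comm, mul_sub, sub_mul, one_mul,
        mul_one, he.eq, sub_self, add_zero] <;>
      rw [smul_smul] <;> simp [hc]
  convert hscale.mul hg.2.2 using 1
  simp only [add_mul, mul_add, smul_mul_assoc, mul_sub, sub_mul, one_mul, mul_one, hg.1, he.eq,
    sub_self]
  abel

lemma IsCornerUnit.add_sub (he : IsIdempotentElem e) (hu : u ∈ corner k e)
    (hg : IsCornerUnit u g) : IsCornerUnit e (g + (e - u)) := by
  have heg : e * g = g := by rw [← hg.1, ← mul_assoc, hu.1]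
  have hge : g * e = g := by rw [← hg.2.1, mul_assoc, hu.2]
  refine ⟨by rw [mul_add, mul_sub, heg, he.eq, hu.1],
    by rw [add_mul, sub_mul, hge, he.eq, hu.2], ?_⟩
  convert hg.2.2 using 1
  abel

lemma IsCornerUnit.isUnit_add (he : IsIdempotentElem e) (hg : IsCornerUnit e g)
    (hh : IsCornerUnit (1 - e) h) : IsUnit (g + h) := by
  have heh : e * h = 0 := by
    rw [← hh.1, ← mul_assoc, mul_sub, mul_one, he.eq, sub_self, zero_mul]
  have hgh : g * h = 0 := by rw [← hg.2.1, mul_assoc, heh, mul_zero]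
  convert hg.2.2.mul hh.2.2 using 1
  simp only [add_mul, mul_add, sub_mul, one_mul, sub_sub_cancel, hgh, heh, hg.2.1, he.eq]
  abel

lemma isCornerUnit_of_mul_eq [IsDedekindFiniteMonoid A] {b c : A} (he : IsIdempotentElem e)
    (hb : b ∈ corner k e) (hc : c * e = c) (hcb : c * b = e) : IsCornerUnit e b := by
  refine ⟨hb.1, hb.2, IsUnit.of_mul_eq_one_right (c + (1 - e)) ?_⟩
  have hcf : c * (1 - e) = 0 := by rw [mul_sub, mul_one, hc, sub_self]
  have hfb : (1 - e) * b = 0 := by rw [sub_mul, one_mul, hb.1, sub_self]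
  rw [add_mul, mul_add, mul_add, hcb, hcf, hfb, he.one_sub.eq]
  abel

end IsCornerUnit

section Span

variable {e u x : A}

lemma mem_span_isCornerUnit_of_isNilpotent (he : IsIdempotentElem e) (hx : x ∈ corner k e)
    (hnil : IsNilpotent x) : x ∈ span k {g | IsCornerUnit e g} := by
  rw [← sub_sub_cancel e x]
  exact sub_mem (subset_span (isCornerUnit_self he))
    (subset_span (isCornerUnit_sub_of_isNilpotent he hx hnil))

/-- `u` is recovered from the two units `e` and `c • u + (e - u)`, where `c ∉ {0, 1}`. -/
lemma mem_span_isCornerUnit_of_isIdempotentElem (hk : ∃ c : k, c ≠ 0 ∧ c ≠ 1)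
    (he : IsIdempotentElem e) (hu : u ∈ corner k e) (hu' : IsIdempotentElem u) :
    u ∈ span k {g | IsCornerUnit e g} := by
  obtain ⟨c, hc0, hc1⟩ := hk
  have hunit : IsCornerUnit e (c • u + (e - u)) :=
    ((isCornerUnit_self hu').smul hu' hc0).add_sub he hu
  have hdiff : (c - 1) • u = (c • u + (e - u)) - e := by rw [sub_smul, one_smul]; abel
  have hmem : (c - 1) • u ∈ span k {g | IsCornerUnit e g} := by
    rw [hdiff]
    exact sub_mem (subset_span hunit) (subset_span (isCornerUnit_self he))
  simpa [smul_smul, inv_mul_cancel₀ (sub_ne_zero.mpr hc1)] using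
    Submodule.smul_mem _ (c - 1)⁻¹ hmem

lemma span_isCornerUnit_le (hk : ∃ c : k, c ≠ 0 ∧ c ≠ 1) (he : IsIdempotentElem e)
    (hu : u ∈ corner k e) (hu' : IsIdempotentElem u) :
    span k {g | IsCornerUnit u g} ≤ span k {g | IsCornerUnit e g} := by
  have hv : e - u ∈ span k {g | IsCornerUnit e g} :=
    sub_mem (subset_span (isCornerUnit_self he))
      (mem_span_isCornerUnit_of_isIdempotentElem hk he hu hu')
  refine span_le.mpr fun g hg => ?_
  rw [← add_sub_cancel_right g (e - u)]
  exact sub_mem (subset_span (IsCornerUnit.add_sub he hu hg)) hv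

end Span

section FiniteDimensional

variable [FiniteDimensional k A] {e b : A}

/-- Fitting's lemma for right multiplication by `b` on `A`, cut down to the corner `e A e`. -/
lemma exists_isIdempotentElem_mul_pow_eq_zero (he : IsIdempotentElem e) (hb : b ∈ corner k e) :
    ∃ u ∈ corner k e, IsIdempotentElem u ∧
      ∃ n : ℕ, u * b ^ (n + 1) = 0 ∧ ∃ w : A, e - u = w * b ^ (n + 1) := by
  obtain ⟨n, hn⟩ :=
    Filter.eventually_atTop.mp (LinearMap.mulRight k b).eventually_isCompl_ker_pow_range_pow
  have hcompl := hn (n + 1) n.le_succ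
  rw [LinearMap.pow_mulRight] at hcompl
  have hpe : b ^ (n + 1) * e = b ^ (n + 1) := by rw [pow_succ, mul_assoc, hb.2]
  set p := b ^ (n + 1)
  have hetop :
      e ∈ LinearMap.ker (LinearMap.mulRight k p) ⊔ LinearMap.range (LinearMap.mulRight k p) :=
    hcompl.sup_eq_top ▸ Submodule.mem_top
  obtain ⟨u₀, hu₀, _, ⟨w, rfl⟩, huv⟩ := Submodule.mem_sup.mp hetop
  simp only [LinearMap.mem_ker, LinearMap.mulRight_apply] at hu₀ huv
  have hu₀e : u₀ * e = u₀ := by rw [eq_sub_of_add_eq huv, sub_mul, mul_assoc, hpe, he.eq]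
  set u := e * u₀
  have hu : u ∈ corner k e := ⟨by rw [← mul_assoc, he.eq], by rw [mul_assoc, hu₀e]⟩
  have hup : u * p = 0 := by rw [mul_assoc, hu₀, mul_zero]
  have hev : e - u = e * w * p := by rw [mul_assoc, eq_sub_of_add_eq' huv, mul_sub, he.eq]
  refine ⟨u, hu, ?_, n, hup, e * w, hev⟩
  have hdiff : u - u * u = u * (e * w) * p := by
    rw [mul_assoc u, ← hev, mul_sub, hu.2]
  refine (sub_eq_zero.mp
    (Submodule.disjoint_def.mp hcompl.disjoint _ ?_ ⟨u * (e * w), ?_⟩)).symm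
  · rw [LinearMap.mem_ker, LinearMap.mulRight_apply, sub_mul, mul_assoc u u p, hup, mul_zero,
      sub_zero]
  · rw [LinearMap.mulRight_apply, hdiff]

theorem isCornerUnit_or_isNilpotent_or_exists_isIdempotentElem (he : IsIdempotentElem e)
    (hb : b ∈ corner k e) :
    IsCornerUnit e b ∨ IsNilpotent b ∨
      ∃ u ∈ corner k e, IsIdempotentElem u ∧ u ≠ 0 ∧ u ≠ e := by
  obtain ⟨u, hu, hu', n, hub, w, hw⟩ := exists_isIdempotentElem_mul_pow_eq_zero he hb
  by_cases hu0 : u = 0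
  · have := IsArtinianRing.of_finite k A
    refine .inl (isCornerUnit_of_mul_eq he hb (c := w * b ^ n * e) (by rw [mul_assoc, he.eq]) ?_)
    rw [hu0, sub_zero] at hw
    rw [mul_assoc _ e b, hb.1, mul_assoc, ← pow_succ, ← hw]
  by_cases hue : u = e
  · refine .inr (.inl ⟨n + 1, ?_⟩)
    rw [← hub, hue, pow_succ', ← mul_assoc, hb.1]
  exact .inr (.inr ⟨u, hu, hu', hu0, hue⟩)

/-- Induction on `dim (e A e)`: an element that is neither a unit nor nilpotent yields an
idempotent `u`, and the Peirce pieces `u x u`, `v x v` (with `v = e - u`) live in smaller corners,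
while `u x v` and `v x u` square to zero. -/
theorem corner_le_span_isCornerUnit (hk : ∃ c : k, c ≠ 0 ∧ c ≠ 1)
    (he : IsIdempotentElem e) : corner k e ≤ span k {g | IsCornerUnit e g} := by
  induction hn : Module.finrank k (corner k e) using Nat.strong_induction_on generalizing e with
  | _ n ih =>
  have hsub : ∀ u ∈ corner k e, IsIdempotentElem u → u ≠ e →
      corner k u ≤ span k {g | IsCornerUnit e g} := fun u hu hu' hue =>
    (ih _ (hn ▸ Submodule.finrank_lt_finrank_of_lt (corner_lt_corner he hu hue)) hu' rfl).trans
      (span_isCornerUnit_le hk he hu hu')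
  intro x hx
  rcases isCornerUnit_or_isNilpotent_or_exists_isIdempotentElem he hx with
    hunit | hnil | ⟨u, hu, hu', hu0, hue⟩
  · exact subset_span hunit
  · exact mem_span_isCornerUnit_of_isNilpotent he hx hnil
  set v := e - u
  have hv : v ∈ corner k e := sub_mem (mem_corner.mpr ⟨he.eq, he.eq⟩) hu
  have hvu : v * u = 0 := by rw [sub_mul, hu.1, hu'.eq, sub_self]
  have huv : u * v = 0 := by rw [mul_sub, hu.2, hu'.eq, sub_self]
  have hpeirce : x = u * x * u + u * x * v + v * x * u + v * x * v := by
    conv_lhs => rw [← hx.1, ← hx.2]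
    simp only [v]
    noncomm_ring
  rw [hpeirce]
  refine add_mem (add_mem (add_mem ?_ ?_) ?_) ?_
  · exact hsub u hu hu' hue (mul_mul_mem_corner hu'.eq hu'.eq x)
  · exact mem_span_isCornerUnit_of_isNilpotent he (mul_mul_mem_corner hu.1 hv.2 x)
      (isNilpotent_mul_mul_of_mul_eq_zero hvu x)
  · exact mem_span_isCornerUnit_of_isNilpotent he (mul_mul_mem_corner hv.1 hu.2 x)
      (isNilpotent_mul_mul_of_mul_eq_zero huv x)
  · have hv' : IsIdempotentElem v := hu'.sub he hu.2 hu.1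
    exact hsub v hv hv' (fun hve => hu0 (sub_eq_self.mp hve))
      (mul_mul_mem_corner hv'.eq hv'.eq x)

end FiniteDimensional

lemma exists_isUnit_map_eq_zero_of_isNilpotent (lam : A →ₗ[k] k) {x : A} (hx : IsNilpotent x)
    (hlx : lam x ≠ 0) : ∃ w : A, IsUnit w ∧ lam w = 0 :=
  ⟨1 - (lam 1 / lam x) • x, (hx.smul _).isUnit_one_sub, by simp [div_mul_cancel₀ _ hlx]⟩

lemma exists_isCornerUnit_map_ne_zero [FiniteDimensional k A] (hk : ∃ c : k, c ≠ 0 ∧ c ≠ 1)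
    {e x : A} (he : IsIdempotentElem e) (hx : x ∈ corner k e) {lam : A →ₗ[k] k}
    (hlx : lam x ≠ 0) : ∃ g : A, IsCornerUnit e g ∧ lam g ≠ 0 := by
  by_contra! h
  have hker : span k {g | IsCornerUnit e g} ≤ LinearMap.ker lam :=
    span_le.mpr fun g hg => LinearMap.mem_ker.mpr (h g hg)
  exact hlx (hker (corner_le_span_isCornerUnit hk he hx))

namespace IsFrobeniusForm

variable {lam : A →ₗ[k] k}

lemma comp_mulLeft (hlam : IsFrobeniusForm lam) {w : A} (hw : IsUnit w) :
    IsFrobeniusForm (lam ∘ₗ LinearMap.mulLeft k w) := by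
  intro a ha
  refine hw.mul_right_eq_zero.mp (hlam _ fun b => ?_)
  simpa [mul_assoc] using ha b

lemma exists_mem_corner_map_ne_zero (hlam : IsFrobeniusForm lam) {e : A}
    (he : IsIdempotentElem e) (he0 : e ≠ 0) (hmix : ∀ y, lam (e * y * (1 - e)) = 0) :
    ∃ x ∈ corner k e, lam x ≠ 0 := by
  obtain ⟨y, hy⟩ : ∃ y, lam (e * y) ≠ 0 := by
    by_contra! h
    exact he0 (hlam e h)
  refine ⟨e * y * e, mul_mul_mem_corner he.eq he.eq y, fun h => hy ?_⟩
  have hsplit : e * y = e * y * e + e * y * (1 - e) := by noncomm_ring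
  rw [hsplit, map_add, h, hmix, add_zero]

variable [FiniteDimensional k A]

lemma exists_isUnit_map_eq_zero_of_isIdempotentElem (hk : ∃ c : k, c ≠ 0 ∧ c ≠ 1)
    (hlam : IsFrobeniusForm lam) {e : A} (he : IsIdempotentElem e) (he0 : e ≠ 0) (he1 : e ≠ 1) :
    ∃ w : A, IsUnit w ∧ lam w = 0 := by
  by_cases hmix : ∃ y, lam (e * y * (1 - e)) ≠ 0 ∨ lam ((1 - e) * y * e) ≠ 0
  · obtain ⟨y, hy | hy⟩ := hmix
    · exact exists_isUnit_map_eq_zero_of_isNilpotent lam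
        (isNilpotent_mul_mul_of_mul_eq_zero (by rw [sub_mul, one_mul, he.eq, sub_self]) y) hy
    · exact exists_isUnit_map_eq_zero_of_isNilpotent lam
        (isNilpotent_mul_mul_of_mul_eq_zero (by rw [mul_sub, mul_one, he.eq, sub_self]) y) hy
  push Not at hmix
  obtain ⟨x, hx, hlx⟩ := hlam.exists_mem_corner_map_ne_zero he he0 fun y => (hmix y).1
  obtain ⟨x', hx', hlx'⟩ := hlam.exists_mem_corner_map_ne_zero he.one_sub
    (sub_ne_zero.mpr (Ne.symm he1)) fun y => by simpa using (hmix y).2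
  obtain ⟨g, hg, hlg⟩ := exists_isCornerUnit_map_ne_zero hk he hx hlx
  obtain ⟨h, hh, hlh⟩ := exists_isCornerUnit_map_ne_zero hk he.one_sub hx' hlx'
  refine ⟨lam h • g + (-lam g) • h,
    (hg.smul he hlh).isUnit_add he (hh.smul he.one_sub (neg_ne_zero.mpr hlg)), ?_⟩
  simp only [map_add, map_smul, smul_eq_mul]
  ring

lemma exists_isUnit_map_eq_zero_of_forall_isUnit_or_isNilpotent (hdim : 2 ≤ Module.finrank k A)
    (hlam : IsFrobeniusForm lam) (h : ∀ a : A, IsUnit a ∨ IsNilpotent a) :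
    ∃ w : A, IsUnit w ∧ lam w = 0 := by
  by_contra! hunit
  have hnil : ∀ z : A, IsNilpotent z → lam z = 0 := fun z hz => by
    by_contra hlz
    obtain ⟨w, hw, hlw⟩ := exists_isUnit_map_eq_zero_of_isNilpotent lam hz hlz
    exact hunit w hw hlw
  obtain ⟨x, hx, hx0⟩ := Submodule.exists_mem_ne_zero_of_ne_bot
    (LinearMap.ker_ne_bot_of_finrank_lt (f := lam) (by rw [Module.finrank_self]; omega))
  have := IsArtinianRing.of_finite k A
  refine hx0 (hlam x fun y => hnil _ ((h _).resolve_left fun hxy => ?_))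
  exact hunit x (isUnit_of_mul_isUnit_left hxy) (LinearMap.mem_ker.mp hx)

end IsFrobeniusForm

end

/-- Let `k` be a field with more than two elements and `A` a
finite-dimensional unital associative `k`-algebra with `dim_k A ≥ 2` that admits a
Frobenius form. Then there exists a Frobenius form `lam'` on `A` with `lam' 1 = 0`. -/
theorem stmt8 (k : Type*) [Field k] (hk : ∃ c : k, c ≠ 0 ∧ c ≠ 1)
    (A : Type*) [Ring A] [Algebra k A] [FiniteDimensional k A]
    (hdim : 2 ≤ Module.finrank k A)
    (hex : ∃ lam : A →ₗ[k] k, IsFrobeniusForm lam) :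
    ∃ lam' : A →ₗ[k] k, IsFrobeniusForm lam' ∧ lam' 1 = 0 := by
  obtain ⟨lam, hlam⟩ := hex
  suffices ∃ w : A, IsUnit w ∧ lam w = 0 by
    obtain ⟨w, hw, hlw⟩ := this
    exact ⟨lam ∘ₗ LinearMap.mulLeft k w, hlam.comp_mulLeft hw, by simpa using hlw⟩
  by_cases hidem : ∃ e : A, IsIdempotentElem e ∧ e ≠ 0 ∧ e ≠ 1
  · obtain ⟨e, he, he0, he1⟩ := hidem
    exact hlam.exists_isUnit_map_eq_zero_of_isIdempotentElem hk he he0 he1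
  refine hlam.exists_isUnit_map_eq_zero_of_forall_isUnit_or_isNilpotent hdim fun a => ?_
  rcases isCornerUnit_or_isNilpotent_or_exists_isIdempotentElem (k := k) IsIdempotentElem.one
    (Submodule.mem_corner.mpr ⟨one_mul a, mul_one a⟩) with ha | ha | ⟨e, -, he, he0, he1⟩
  · exact .inl (isCornerUnit_one_iff.mp ha)
  · exact .inr ha
  · exact absurd ⟨e, he, he0, he1⟩ hidem
end

section
/- Let k be a field, A a finite-dimensional unital associative k-algebra, and λ a Frobenius form on A such that λ(u) ≠ 0 for every unit u of A. Then A is a semisimple ring (its Jacobson radical is zero). -/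
theorem isUnit_one_add_of_mem_jacobson {R : Type*} [Ring R] [IsDedekindFiniteMonoid R] {x : R}
    (hx : x ∈ Ring.jacobson R) : IsUnit (1 + x) := by
  rw [← Ideal.jacobson_bot] at hx
  obtain ⟨z, hz⟩ := Ideal.mem_jacobson_iff.mp hx 1
  rw [Ideal.mem_bot, sub_eq_zero, mul_one] at hz
  exact IsUnit.of_mul_eq_one_right z (by rw [mul_add, mul_one, add_comm, hz])

theorem LinearMap.map_eq_zero_of_mem_jacobson {k A : Type*} [Field k] [Ring A] [Algebra k A]
    [IsDedekindFiniteMonoid A] (lam : A →ₗ[k] k) (hunit : ∀ u : Aˣ, lam ↑u ≠ 0) {y : A}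
    (hy : y ∈ Ring.jacobson A) : lam y = 0 := by
  by_contra hne
  set c : k := -lam 1 / lam y
  obtain ⟨u, hu⟩ :=
    isUnit_one_add_of_mem_jacobson (Submodule.smul_of_tower_mem _ c hy)
  apply hunit u
  rw [hu, map_add, map_smul, smul_eq_mul, div_mul_cancel₀ _ hne, add_neg_cancel]

theorem IsFrobeniusForm.eq_bot_of_map_eq_zero {k A : Type*} [Field k] [Ring A] [Algebra k A]
    {lam : A →ₗ[k] k} (hlam : IsFrobeniusForm lam) (I : Ideal A) [I.IsTwoSided]
    (hI : ∀ y ∈ I, lam y = 0) : I = ⊥ :=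
  (Submodule.eq_bot_iff I).mpr fun y hy => hlam y fun b => hI _ (I.mul_mem_right b hy)

/-- Let `k` be a field, `A` a finite-dimensional unital associative
`k`-algebra, and `lam` a Frobenius form on `A` such that `lam u ≠ 0` for every unit
`u` of `A`. Then `A` is a semisimple ring (its Jacobson radical is zero). -/
theorem stmt9 (k : Type*) [Field k] (A : Type*) [Ring A] [Algebra k A]
    [FiniteDimensional k A]
    (lam : A →ₗ[k] k) (hlam : IsFrobeniusForm lam)
    (hunit : ∀ u : Aˣ, lam ↑u ≠ 0) :
    IsSemisimpleRing A := by
  have : IsArtinianRing A := IsArtinianRing.of_finite k A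
  exact IsArtinianRing.isSemisimpleRing_iff_jacobson.mpr <|
    hlam.eq_bot_of_map_eq_zero _ fun _ hy => lam.map_eq_zero_of_mem_jacobson hunit hy
end

section
/- Let A be a finite-dimensional unital associative algebra over the two-element field F₂ = ZMod 2, and let λ be a Frobenius form on A such that λ(u) ≠ 0 for every unit u of A. Then there exists an odd natural number m and an F₂-algebra isomorphism A ≅ F₂^m, the product algebra Fin m → F₂ with pointwise operations. -/
lemma exists_pos_isIdempotentElem_pow {M : Type*} [Monoid M] [Finite M] (x : M) :
    ∃ n, 0 < n ∧ IsIdempotentElem (x ^ n) := by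
  obtain ⟨i, j, hij, h⟩ := Finite.exists_ne_map_eq_of_infinite (x ^ · : ℕ → M)
  wlog hlt : i < j generalizing i j
  · exact this j i hij.symm h.symm (lt_of_le_of_ne (not_lt.mp hlt) hij.symm)
  have hper : ∀ t, x ^ (i + t * (j - i)) = x ^ i := by
    intro t
    induction t with
    | zero => simp
    | succ t ih =>
      rw [add_mul, one_mul, ← add_assoc, pow_add, ih, ← pow_add, Nat.add_sub_cancel' hlt.le]
      exact h.symm
  have hp : 0 < j - i := Nat.sub_pos_of_lt hlt
  refine ⟨(i + 1) * (j - i), Nat.mul_pos i.succ_pos hp, ?_⟩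
  have hle : i ≤ (i + 1) * (j - i) := (Nat.le_succ i).trans (Nat.le_mul_of_pos_right _ hp)
  have hN := hper (i + 1)
  generalize (i + 1) * (j - i) = N at hle hN ⊢
  calc x ^ N * x ^ N = x ^ (i + N) * x ^ (N - i) := by rw [← pow_add, ← pow_add]; congr 1; omega
    _ = x ^ N := by rw [hN, ← pow_add]; congr 1; omega

lemma IsIdempotentElem.eq_zero_of_eq_mul_of_isNilpotent {R : Type*} [MonoidWithZero R]
    {f x c : R} (hf : IsIdempotentElem f) (hfx : Commute f x) (hfc : Commute f c)
    (hx : IsNilpotent x) (h : f = x * c) : f = 0 := by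
  obtain ⟨n, hn⟩ := hx
  have key : ∀ k : ℕ, x ^ k * c ^ k * f = f := by
    intro k
    induction k with
    | zero => simp
    | succ k ih =>
      calc x ^ (k + 1) * c ^ (k + 1) * f = x * (x ^ k * c ^ k * f) * c := by
            rw [pow_succ' x, pow_succ c]; simp only [mul_assoc, ← hfc.eq]
        _ = f := by rw [ih, ← hfx.eq, mul_assoc, ← h, hf.eq]
  simpa [hn] using (key n).symm

lemma IsIdempotentElem.isNilpotent_mul_mul_one_sub {R : Type*} [Ring R] {e : R}
    (he : IsIdempotentElem e) (p : R) : IsNilpotent (e * p * (1 - e)) :=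
  ⟨2, by
    rw [pow_two, show e * p * (1 - e) * (e * p * (1 - e)) = e * p * ((1 - e) * e) * p * (1 - e)
      by noncomm_ring, he.one_sub_mul_self, mul_zero, zero_mul, zero_mul]⟩

structure IsPrimitiveIdempotent {R : Type*} [MonoidWithZero R] (e : R) : Prop where
  isIdempotentElem : IsIdempotentElem e
  ne_zero : e ≠ 0
  eq_zero_or_eq : ∀ f, IsIdempotentElem f → e * f = f → f * e = f → f = 0 ∨ f = e

lemma IsPrimitiveIdempotent.mul_eq_zero_of_ne {R : Type*} [MonoidWithZero R] {e f : R}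
    (he : IsPrimitiveIdempotent e) (hf : IsPrimitiveIdempotent f) (hef : Commute e f)
    (hne : e ≠ f) : e * f = 0 := by
  have hidem : IsIdempotentElem (e * f) :=
    he.isIdempotentElem.mul_of_commute hef hf.isIdempotentElem
  rcases he.eq_zero_or_eq _ hidem (by rw [← mul_assoc, he.isIdempotentElem.eq])
    (by rw [mul_assoc, ← hef.eq, ← mul_assoc, he.isIdempotentElem.eq]) with h | h
  · exact h
  rcases hf.eq_zero_or_eq _ hidem
    (by rw [← mul_assoc, ← hef.eq, mul_assoc, hf.isIdempotentElem.eq])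
    (by rw [mul_assoc, hf.isIdempotentElem.eq]) with h' | h'
  · exact h'
  · exact absurd (h.symm.trans h') hne

section FiniteRing

variable {R : Type*} [Ring R] [Finite R]

lemma IsIdempotentElem.exists_isPrimitiveIdempotent_mul_eq {g : R} (hg : IsIdempotentElem g)
    (hg0 : g ≠ 0) : ∃ e, IsPrimitiveIdempotent e ∧ g * e = e ∧ e * g = e := by
  set S := {f : R | IsIdempotentElem f ∧ f ≠ 0 ∧ g * f = f ∧ f * g = f}
  obtain ⟨f, ⟨hf, hf0, hgf, hfg⟩, hmin⟩ :=
    S.exists_min_image (fun f ↦ {x : R | f * x = x ∧ x * f = x}.ncard) S.toFinite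
      ⟨g, hg, hg0, hg.eq, hg.eq⟩
  refine ⟨f, ⟨hf, hf0, fun h hh hfh hhf ↦ ?_⟩, hgf, hfg⟩
  by_contra! hne
  have hsub : {x | h * x = x ∧ x * h = x} ⊂ {x | f * x = x ∧ x * f = x} := by
    refine (Set.ssubset_iff_of_subset ?_).mpr ⟨f, ⟨hf.eq, hf.eq⟩, fun hfh' ↦ hne.2 ?_⟩
    · rintro x ⟨hx₁, hx₂⟩
      exact ⟨by rw [← hx₁, ← mul_assoc, hfh], by rw [← hx₂, mul_assoc, hhf]⟩
    · exact hhf.symm.trans hfh'.1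
  have := hmin h ⟨hh, hne.1, by rw [← hfh, ← mul_assoc, hgf], by rw [← hhf, mul_assoc, hfg]⟩
  exact (Set.ncard_lt_ncard hsub (Set.toFinite _)).not_ge this

lemma exists_completeOrthogonalIdempotents_isPrimitiveIdempotent
    (hcomm : ∀ e f : R, IsIdempotentElem e → IsIdempotentElem f → Commute e f) :
    ∃ (m : ℕ) (e : Fin m → R), CompleteOrthogonalIdempotents e ∧
      ∀ i, IsPrimitiveIdempotent (e i) := by
  classical
  set P := (Set.toFinite {e : R | IsPrimitiveIdempotent e}).toFinset
  have hP {e : R} : e ∈ P ↔ IsPrimitiveIdempotent e := by simp [P]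
  have hortho : OrthogonalIdempotents (fun e : P ↦ (e : R)) :=
    ⟨fun e ↦ (hP.mp e.2).isIdempotentElem, fun e f hne ↦ (hP.mp e.2).mul_eq_zero_of_ne
      (hP.mp f.2) (hcomm _ _ (hP.mp e.2).isIdempotentElem (hP.mp f.2).isIdempotentElem)
      (Subtype.coe_injective.ne hne)⟩
  have hcomplete : CompleteOrthogonalIdempotents (fun e : P ↦ (e : R)) := by
    refine ⟨hortho, by_contra fun hs ↦ ?_⟩
    obtain ⟨e, he, -, heg⟩ := (hortho.isIdempotentElem_sum (s := Finset.univ)).one_sub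
      |>.exists_isPrimitiveIdempotent_mul_eq (sub_ne_zero.mpr (Ne.symm hs))
    have hes := hortho.mul_sum_of_mem (i := ⟨e, hP.mpr he⟩) (Finset.mem_univ _)
    apply he.ne_zero
    rw [← heg, mul_sub, mul_one, hes, sub_self]
  exact ⟨_, _, (CompleteOrthogonalIdempotents.equiv P.equivFin.symm).mpr hcomplete,
    fun i ↦ hP.mp (P.equivFin.symm i).2⟩

end FiniteRing

section PiAlgHom

variable {k A ι : Type*} [Fintype ι] {e : ι → A}

noncomputable def CompleteOrthogonalIdempotents.piAlgHom [CommSemiring k] [Semiring A]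
    [Algebra k A] (he : CompleteOrthogonalIdempotents e) : (ι → k) →ₐ[k] A :=
  AlgHom.ofLinearMap (Fintype.linearCombination k e)
    (by simp [Fintype.linearCombination_apply, he.complete]) fun v w ↦ by
      classical
      simp [Fintype.linearCombination_apply, Finset.sum_mul_sum, he.mul_eq, smul_smul, mul_comm]

lemma CompleteOrthogonalIdempotents.mul_piAlgHom_apply [CommSemiring k] [Semiring A]
    [Algebra k A] (he : CompleteOrthogonalIdempotents e) (v : ι → k) (j : ι) :
    e j * he.piAlgHom v = v j • e j := by
  classical
  simp [piAlgHom, Fintype.linearCombination_apply, Finset.mul_sum, he.mul_eq]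

lemma CompleteOrthogonalIdempotents.bijective_piAlgHom [Field k] [Ring A] [Algebra k A]
    (he : CompleteOrthogonalIdempotents e) (hne : ∀ i, e i ≠ 0)
    (hspan : ∀ i a, ∃ c : k, e i * a = c • e i) : Function.Bijective (he.piAlgHom (k := k)) := by
  refine ⟨(injective_iff_map_eq_zero _).mpr fun v hv ↦ funext fun j ↦ ?_, fun a ↦ ?_⟩
  · have := he.mul_piAlgHom_apply v j
    rw [hv, mul_zero, eq_comm, smul_eq_zero] at this
    exact this.resolve_right (hne j)
  · choose c hc using hspan
    refine ⟨fun i ↦ c i a, ?_⟩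
    simp [piAlgHom, Fintype.linearCombination_apply, ← hc, ← Finset.sum_mul, he.complete]

end PiAlgHom

lemma ZMod.eq_one_of_ne_zero {a : ZMod 2} (ha : a ≠ 0) : a = 1 := by
  revert a
  decide

section UnitsNonvanishing

variable {A : Type*} [Ring A] [Algebra (ZMod 2) A] {lam : A →ₗ[ZMod 2] ZMod 2}
  (hunit : ∀ u : Aˣ, lam u ≠ 0)
include hunit

lemma apply_eq_one_of_isUnit {u : A} (hu : IsUnit u) : lam u = 1 := by
  obtain ⟨u, rfl⟩ := hu
  exact ZMod.eq_one_of_ne_zero (hunit u)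

lemma apply_one_eq_one : lam 1 = 1 :=
  apply_eq_one_of_isUnit hunit isUnit_one

lemma apply_eq_zero_of_isNilpotent {x : A} (hx : IsNilpotent x) : lam x = 0 := by
  have h := apply_eq_one_of_isUnit hunit hx.isUnit_one_add
  rw [map_add, apply_one_eq_one hunit] at h
  linear_combination h

lemma apply_mul_eq_zero_of_isNilpotent {y z : A} (hy : IsNilpotent y) (hz : IsNilpotent z) :
    lam (y * z) = 0 := by
  have h := apply_eq_one_of_isUnit hunit (hy.isUnit_one_add.mul hz.isUnit_one_add)
  rw [show (1 + y) * (1 + z) = 1 + y + z + y * z by noncomm_ring, map_add, map_add, map_add,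
    apply_one_eq_one hunit, apply_eq_zero_of_isNilpotent hunit hy,
    apply_eq_zero_of_isNilpotent hunit hz] at h
  linear_combination h

/-- `z + (1 - e)` is a unit of `A` whenever `z` is a unit of the corner ring `eAe`. -/
lemma apply_eq_apply_of_mul_eq {e z w : A} (he : IsIdempotentElem e)
    (hez : e * z = z) (hze : z * e = z) (hew : e * w = w) (hwe : w * e = w)
    (hzw : z * w = e) (hwz : w * z = e) : lam z = lam e := by
  have hunit' : IsUnit (z + (1 - e)) := by
    refine ⟨⟨z + (1 - e), w + (1 - e), ?_, ?_⟩, rfl⟩ <;>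
      simp only [add_mul, mul_add, mul_sub, sub_mul, mul_one, one_mul, he.eq, hez, hze, hew,
        hwe, hzw, hwz] <;> abel
  have h := apply_eq_one_of_isUnit hunit hunit'
  rw [map_add, map_sub, apply_one_eq_one hunit] at h
  linear_combination h

variable (hlam : IsFrobeniusForm lam)
include hlam

lemma IsIdempotentElem.mul_mul_one_sub_eq_zero_of_isFrobeniusForm {e : A}
    (he : IsIdempotentElem e) (a : A) : e * a * (1 - e) = 0 := by
  refine hlam _ fun b ↦ ?_
  have hnil : IsNilpotent ((1 - e) * b * e) := by
    simpa using he.one_sub.isNilpotent_mul_mul_one_sub b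
  have hsplit : e * a * (1 - e) * b =
      e * a * (1 - e) * ((1 - e) * b * e) + e * (a * (1 - e) * b) * (1 - e) := by
    calc _ = e * a * ((1 - e) * (1 - e)) * b * e + e * a * (1 - e) * b * (1 - e) := by
          rw [he.one_sub.eq]; noncomm_ring
      _ = _ := by noncomm_ring
  rw [hsplit, map_add,
    apply_mul_eq_zero_of_isNilpotent hunit (he.isNilpotent_mul_mul_one_sub a) hnil,
    apply_eq_zero_of_isNilpotent hunit (he.isNilpotent_mul_mul_one_sub _), add_zero]

lemma IsIdempotentElem.commute_of_isFrobeniusForm {e : A} (he : IsIdempotentElem e) (a : A) :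
    Commute e a := by
  have h₁ := he.mul_mul_one_sub_eq_zero_of_isFrobeniusForm hunit hlam a
  have h₂ := he.one_sub.mul_mul_one_sub_eq_zero_of_isFrobeniusForm hunit hlam a
  rw [sub_sub_cancel] at h₂
  calc e * a = e * a * e + e * a * (1 - e) := by noncomm_ring
    _ = e * a * e + (1 - e) * a * e := by rw [h₁, h₂]
    _ = a * e := by noncomm_ring

end UnitsNonvanishing

section FiniteFrobenius

variable {A : Type*} [Ring A] [Algebra (ZMod 2) A] [Finite A] {lam : A →ₗ[ZMod 2] ZMod 2}
  (hunit : ∀ u : Aˣ, lam u ≠ 0) (hlam : IsFrobeniusForm lam)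
include hunit hlam

lemma isReduced_of_isFrobeniusForm : IsReduced A := by
  refine ⟨fun x hx ↦ hlam _ fun b ↦ apply_eq_zero_of_isNilpotent hunit ?_⟩
  obtain ⟨k, hk, hidem⟩ := exists_pos_isIdempotentElem_pow (x * b)
  refine ⟨k, hidem.eq_zero_of_eq_mul_of_isNilpotent
    (hidem.commute_of_isFrobeniusForm hunit hlam x)
    (hidem.commute_of_isFrobeniusForm hunit hlam (b * (x * b) ^ (k - 1))) hx ?_⟩
  rw [← mul_assoc, ← pow_succ', Nat.sub_add_cancel hk]

namespace IsPrimitiveIdempotent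

variable {e : A} (hp : IsPrimitiveIdempotent e)
include hp

lemma apply_eq_of_mul_left_eq {z : A} (hz : e * z = z) (hz0 : z ≠ 0) : lam z = lam e := by
  have he := hp.isIdempotentElem
  have hcomm := he.commute_of_isFrobeniusForm hunit hlam
  obtain ⟨k, hk, hidem⟩ := exists_pos_isIdempotentElem_pow z
  have hek : e * z ^ k = z ^ k := by rw [← Nat.sub_add_cancel hk, pow_succ', ← mul_assoc, hz]
  have hze : z * e = z := (hcomm z).eq.symm.trans hz
  rcases hp.eq_zero_or_eq _ hidem hek ((hcomm _).eq.symm.trans hek) with h | h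
  · exact absurd ((isReduced_of_isFrobeniusForm hunit hlam).eq_zero z ⟨k, h⟩) hz0
  refine apply_eq_apply_of_mul_eq hunit he (w := e * z ^ (k - 1)) hz hze
    (by rw [← mul_assoc, he.eq]) (by rw [mul_assoc, ← (hcomm _).eq, ← mul_assoc, he.eq]) ?_ ?_
  · rw [← mul_assoc, hze, ← pow_succ', Nat.sub_add_cancel hk, h]
  · rw [mul_assoc, ← pow_succ, Nat.sub_add_cancel hk, h, he.eq]

lemma apply_eq_one : lam e = 1 := by
  refine ZMod.eq_one_of_ne_zero fun h0 ↦ hp.ne_zero (hlam _ fun b ↦ ?_)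
  by_cases hb : e * b = 0
  · rw [hb, map_zero]
  · rw [hp.apply_eq_of_mul_left_eq hunit hlam
      (by rw [← mul_assoc, hp.isIdempotentElem.eq]) hb, h0]

lemma mul_eq_zero_or_eq (a : A) : e * a = 0 ∨ e * a = e := by
  by_contra! h
  have he := hp.isIdempotentElem
  have h₁ := hp.apply_eq_of_mul_left_eq hunit hlam (by rw [← mul_assoc, he.eq]) h.1
  have h₂ := hp.apply_eq_of_mul_left_eq hunit hlam (z := e * a - e)
    (by rw [mul_sub, ← mul_assoc, he.eq]) (sub_ne_zero.mpr h.2)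
  rw [map_sub, h₁, sub_self, hp.apply_eq_one hunit hlam] at h₂
  exact zero_ne_one h₂

end IsPrimitiveIdempotent

end FiniteFrobenius

/-- Let `A` be a finite-dimensional unital associative algebra over
`F₂ = ZMod 2`, and `lam` a Frobenius form on `A` such that `lam u ≠ 0` for every unit
`u` of `A`. Then there is an odd natural number `m` and an `F₂`-algebra isomorphism
`A ≅ F₂^m` (the product algebra `Fin m → F₂` with pointwise operations). -/
theorem stmt10 (A : Type*) [Ring A] [Algebra (ZMod 2) A] [FiniteDimensional (ZMod 2) A]
    (lam : A →ₗ[ZMod 2] ZMod 2) (hlam : IsFrobeniusForm lam)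
    (hunit : ∀ u : Aˣ, lam ↑u ≠ 0) :
    ∃ m : ℕ, Odd m ∧ Nonempty (A ≃ₐ[ZMod 2] (Fin m → ZMod 2)) := by
  have : Finite A := Module.finite_of_finite (ZMod 2)
  obtain ⟨m, e, he, hprim⟩ := exists_completeOrthogonalIdempotents_isPrimitiveIdempotent
    fun e f he _ ↦ he.commute_of_isFrobeniusForm hunit hlam f
  have hspan (i : Fin m) (a : A) : ∃ c : ZMod 2, e i * a = c • e i := by
    rcases (hprim i).mul_eq_zero_or_eq hunit hlam a with h | h
    exacts [⟨0, by rw [h, zero_smul]⟩, ⟨1, by rw [h, one_smul]⟩]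
  refine ⟨m, ?_, ⟨(AlgEquiv.ofBijective _
    (he.bijective_piAlgHom (fun i ↦ (hprim i).ne_zero) hspan)).symm⟩⟩
  rw [← ZMod.natCast_eq_one_iff_odd, ← apply_one_eq_one hunit, ← he.complete, map_sum]
  simp [fun i ↦ (hprim i).apply_eq_one hunit hlam]
end
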